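/- arXiv:2409.17148 — 5 statements merged into one kernel-verified Lean document; each statement's English description precedes it below -/
import Mathlib

section
/- For the rook polynomials P_{m,n}(z) generated by 1/(1-2s-2t-zst), the diagonal polynomials satisfy P_{m,m}(z) = z^m · L_m(8/z + 1) for z ≠ 0, where L_m is the m-th Legendre polynomial. -/
/-!
Dividing `P z m n` by `2 ^ (m + n)` leaves the weighted Delannoy numbers with diagonal weight
`y = z / 4`, whose row generating functions are `(1 + y t) ^ m / (1 - t) ^ (m + 1)`. Reading off
the coefficient of `t ^ m` gives `y ^ m * P̃ₘ(-1 / y)` for the shifted Legendre polynomial `P̃ₘ`,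
and `Lₘ(x) = P̃ₘ((1 - x) / 2)` because both sides satisfy Bonnet's recurrence, which for `P̃ₘ` is
a three-term identity between its binomial coefficients.
-/

open Finset

section ShiftedLegendre

open Polynomial

def shiftedLegendreCoeff (n k : ℕ) : ℕ := n.choose k * (n + k).choose n

theorem sq_mul_shiftedLegendreCoeff_add_two (n k : ℕ) :
    (k + 1) ^ 2 * shiftedLegendreCoeff (n + 2) (k + 1) =
      (n + k + 2) * (n + k + 3) * shiftedLegendreCoeff (n + 1) k := by
  have h₁ : (n + 2).choose (k + 1) * (k + 1) = (n + 2) * (n + 1).choose k :=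
    (Nat.add_one_mul_choose_eq (n + 1) k).symm
  have h₂ : (n + k + 3).choose (n + 2) * (n + 2) = (n + k + 3) * (n + k + 2).choose (n + 1) :=
    (Nat.add_one_mul_choose_eq (n + k + 2) (n + 1)).symm
  have h₃ : (n + k + 2).choose (n + 1) * (k + 1) = (n + k + 1).choose (n + 1) * (n + k + 2) := by
    have := Nat.choose_mul_succ_eq (n + k + 1) (n + 1)
    rw [show n + k + 1 + 1 - (n + 1) = k + 1 by omega] at this
    exact this.symm
  refine Nat.eq_of_mul_eq_mul_left (show 0 < n + 2 by omega) ?_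
  unfold shiftedLegendreCoeff
  rw [show n + 2 + (k + 1) = n + k + 3 by ring, show n + 1 + k = n + k + 1 by ring]
  calc (n + 2) * ((k + 1) ^ 2 * ((n + 2).choose (k + 1) * (n + k + 3).choose (n + 2)))
      = (n + 2).choose (k + 1) * (k + 1) * ((n + k + 3).choose (n + 2) * (n + 2)) * (k + 1) := by
        ring
    _ = (n + 2) * (n + k + 3) * ((n + k + 2).choose (n + 1) * (k + 1)) * (n + 1).choose k := by
        rw [h₁, h₂]; ring
    _ = _ := by rw [h₃]; ring

theorem sq_mul_shiftedLegendreCoeff_succ (n k : ℕ) :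
    (k + 1) ^ 2 * shiftedLegendreCoeff (n + 1) (k + 1) =
      (n + 1 - k) * (n + k + 2) * shiftedLegendreCoeff (n + 1) k := by
  have h₁ := Nat.choose_succ_right_eq (n + 1) k
  have h₂ : (n + k + 2).choose (n + 1) * (k + 1) = (n + k + 1).choose (n + 1) * (n + k + 2) := by
    have := Nat.choose_mul_succ_eq (n + k + 1) (n + 1)
    rw [show n + k + 1 + 1 - (n + 1) = k + 1 by omega] at this
    exact this.symm
  unfold shiftedLegendreCoeff
  rw [show n + 1 + (k + 1) = n + k + 2 by ring, show n + 1 + k = n + k + 1 by ring]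
  calc (k + 1) ^ 2 * ((n + 1).choose (k + 1) * (n + k + 2).choose (n + 1))
      = (n + 1).choose (k + 1) * (k + 1) * ((n + k + 2).choose (n + 1) * (k + 1)) := by ring
    _ = _ := by rw [h₁, h₂]; ring

theorem sq_mul_shiftedLegendreCoeff (n k : ℕ) :
    (k + 1) ^ 2 * shiftedLegendreCoeff n (k + 1) =
      (n - k) * (n + 1 - k) * shiftedLegendreCoeff (n + 1) k := by
  have h₁ := Nat.choose_succ_right_eq n k
  have h₂ := Nat.choose_mul_succ_eq n k
  have h₃ : (n + k + 1).choose (n + 1) * (n + 1) = (n + k + 1).choose n * (k + 1) := by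
    have := Nat.choose_succ_right_eq (n + k + 1) n
    rwa [show n + k + 1 - n = k + 1 by omega] at this
  refine Nat.eq_of_mul_eq_mul_left (show 0 < n + 1 by omega) ?_
  unfold shiftedLegendreCoeff
  rw [show n + (k + 1) = n + k + 1 by ring, show n + 1 + k = n + k + 1 by ring]
  calc (n + 1) * ((k + 1) ^ 2 * (n.choose (k + 1) * (n + k + 1).choose n))
      = n.choose (k + 1) * (k + 1) * (n + 1) * ((n + k + 1).choose n * (k + 1)) := by ring
    _ = (n - k) * (n.choose k * (n + 1)) * ((n + k + 1).choose (n + 1) * (n + 1)) := by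
        rw [h₁, ← h₃]; ring
    _ = _ := by rw [h₂]; ring

theorem shiftedLegendreCoeff_recurrence (n k : ℕ) :
    (n + 2) * shiftedLegendreCoeff (n + 2) (k + 1) + (n + 1) * shiftedLegendreCoeff n (k + 1) =
      (2 * n + 3) *
        (shiftedLegendreCoeff (n + 1) (k + 1) + 2 * shiftedLegendreCoeff (n + 1) k) := by
  set c := shiftedLegendreCoeff
  -- After multiplying by `(k + 1) ^ 2`, every term is a polynomial multiple of `c (n + 1) k`.
  refine Nat.eq_of_mul_eq_mul_left (show 0 < (k + 1) ^ 2 by positivity) ?_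
  calc (k + 1) ^ 2 * ((n + 2) * c (n + 2) (k + 1) + (n + 1) * c n (k + 1))
      = (n + 2) * ((k + 1) ^ 2 * c (n + 2) (k + 1)) + (n + 1) * ((k + 1) ^ 2 * c n (k + 1)) := by
        ring
    _ = ((n + 2) * (n + k + 2) * (n + k + 3) + (n + 1) * ((n - k) * (n + 1 - k))) *
          c (n + 1) k := by
        rw [sq_mul_shiftedLegendreCoeff_add_two, sq_mul_shiftedLegendreCoeff]; ring
    _ = (2 * n + 3) * ((n + 1 - k) * (n + k + 2) + 2 * (k + 1) ^ 2) * c (n + 1) k := by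
        -- With truncated subtraction this needs `k ≤ n + 1`; otherwise `c (n + 1) k = 0`.
        rcases lt_or_ge (n + 1) k with hk | hk
        · simp [c, shiftedLegendreCoeff, Nat.choose_eq_zero_of_lt hk]
        obtain rfl | hk := hk.eq_or_lt
        · simp only [Nat.sub_self, Nat.sub_eq_zero_of_le (Nat.le_succ n)]; ring
        obtain ⟨e, rfl⟩ := Nat.exists_eq_add_of_le (Nat.le_of_lt_succ hk)
        rw [show k + e + 1 - k = e + 1 by omega, Nat.add_sub_cancel_left]; ring
    _ = (2 * n + 3) * ((k + 1) ^ 2 * c (n + 1) (k + 1) + 2 * (k + 1) ^ 2 * c (n + 1) k) := by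
        rw [sq_mul_shiftedLegendreCoeff_succ]; ring
    _ = _ := by ring

theorem shiftedLegendre_recurrence (n : ℕ) :
    ((n : ℤ[X]) + 2) * shiftedLegendre (n + 2) =
      (2 * (n : ℤ[X]) + 3) * (1 - 2 * X) * shiftedLegendre (n + 1) -
        ((n : ℤ[X]) + 1) * shiftedLegendre n := by
  have hcoeff (m j : ℕ) :
      (shiftedLegendre m).coeff j = (-1) ^ j * (shiftedLegendreCoeff m j : ℤ) := by
    rw [coeff_shiftedLegendre, shiftedLegendreCoeff]; push_cast; ring
  ext (_ | k)
  · simp only [add_mul, sub_mul, mul_sub, mul_assoc, one_mul, mul_one, coeff_add, coeff_sub,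
      coeff_ofNat_mul, mul_coeff_zero, coeff_natCast_ite, ↓reduceIte, coeff_X_zero, mul_zero,
      sub_zero, hcoeff, shiftedLegendreCoeff, pow_zero, Nat.choose_zero_right, add_zero,
      Nat.choose_self, Nat.cast_one]
    ring
  · simp only [add_mul, sub_mul, mul_sub, mul_assoc, one_mul, mul_one, coeff_add, coeff_sub,
      coeff_natCast_mul, coeff_ofNat_mul, coeff_X_mul, hcoeff]
    have h := shiftedLegendreCoeff_recurrence n k
    zify at h
    linear_combination (-1) ^ (k + 1) * h

theorem shiftedLegendre_one : shiftedLegendre 1 = 1 - 2 * X := by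
  ext (_ | _ | k) <;> simp [coeff_shiftedLegendre, coeff_one, coeff_X, Nat.choose_eq_zero_of_lt]

theorem eq_aeval_shiftedLegendre_of_recurrence {K : Type*} [Field K] [CharZero K]
    (L : ℕ → K → K) (hL0 : ∀ x, L 0 x = 1) (hL1 : ∀ x, L 1 x = x)
    (hLrec : ∀ (m : ℕ) (x : K),
      (m + 2 : K) * L (m + 2) x = (2 * m + 3) * x * L (m + 1) x - (m + 1 : K) * L m x)
    (m : ℕ) (x : K) : L m x = aeval ((1 - x) / 2) (shiftedLegendre m) := by
  set y := (1 - x) / 2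
  have hx : 1 - 2 * y = x := by simp only [y]; field_simp; ring
  induction m using Nat.twoStepInduction with
  | zero => simp [hL0, shiftedLegendre]
  | one => rw [hL1, shiftedLegendre_one, map_sub, map_one, map_mul, map_ofNat, aeval_X, hx]
  | more m ih₀ ih₁ =>
    have hrec := congrArg (aeval y) (shiftedLegendre_recurrence m)
    simp only [map_mul, map_sub, map_add, map_natCast, map_ofNat, map_one, aeval_X, hx] at hrec
    refine mul_left_cancel₀ (show (m + 2 : K) ≠ 0 by norm_cast) ?_
    rw [hLrec, hrec, ih₀, ih₁]

end ShiftedLegendre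

section WeightedDelannoy

open PowerSeries

variable {R : Type*} [CommRing R]

-- Lattice paths from `(0, 0)` to `(m, n)` with steps `(1, 0)`, `(0, 1)` and `(1, 1)`,
-- each diagonal step weighted by `y`.
noncomputable def weightedDelannoy (y : R) (m n : ℕ) : R :=
  coeff n ((1 + C y * X) ^ m * (invOneSubPow R (m + 1)).val)

theorem weightedDelannoy_zero_left (y : R) (n : ℕ) : weightedDelannoy y 0 n = 1 := by
  simp [weightedDelannoy, invOneSubPow_val_succ_eq_mk_add_choose]

theorem weightedDelannoy_zero_right (y : R) (m : ℕ) : weightedDelannoy y m 0 = 1 := by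
  simp [weightedDelannoy, invOneSubPow_val_succ_eq_mk_add_choose]

theorem weightedDelannoy_succ_succ (y : R) (m n : ℕ) :
    weightedDelannoy y (m + 1) (n + 1) =
      weightedDelannoy y m (n + 1) + weightedDelannoy y (m + 1) n + y * weightedDelannoy y m n := by
  have h := one_sub_pow_mul_invOneSubPow_val_add_eq_invOneSubPow_val R (m + 1) 1
  rw [pow_one] at h
  have hseries : (1 - X) * ((1 + C y * X) ^ (m + 1) * (invOneSubPow R (m + 1 + 1)).val) =
      (1 + C y * X) * ((1 + C y * X) ^ m * (invOneSubPow R (m + 1)).val) := by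
    rw [← h]; ring
  have hcoeff := congrArg (coeff (n + 1)) hseries
  simp only [sub_mul, add_mul, one_mul, mul_assoc, map_sub, map_add, coeff_succ_X_mul,
    coeff_C_mul] at hcoeff
  unfold weightedDelannoy
  linear_combination hcoeff

theorem coeff_one_add_C_mul_X_pow (y : R) (m i : ℕ) :
    coeff i ((1 + C y * X) ^ m) = m.choose i * y ^ i := by
  have : (1 + C y * X) ^ m = rescale y (((1 + Polynomial.X) ^ m : Polynomial R) : R⟦X⟧) := by
    simp
  rw [this, coeff_rescale, Polynomial.coeff_coe, Polynomial.coeff_one_add_X_pow, mul_comm]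

theorem weightedDelannoy_self_eq_sum (y : R) (m : ℕ) :
    weightedDelannoy y m m =
      ∑ p ∈ antidiagonal m, (m.choose p.1 * (m + p.2).choose m : ℕ) * y ^ p.1 := by
  rw [weightedDelannoy, coeff_mul]
  refine sum_congr rfl fun p _ => ?_
  rw [coeff_one_add_C_mul_X_pow, invOneSubPow_val_succ_eq_mk_add_choose, coeff_mk]
  push_cast
  ring

end WeightedDelannoy

open Polynomial in
theorem weightedDelannoy_self_eq_aeval_shiftedLegendre {K : Type*} [Field K] {y : K} (hy : y ≠ 0)
    (m : ℕ) : weightedDelannoy y m m = y ^ m * aeval (-y⁻¹) (shiftedLegendre m) := by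
  rw [weightedDelannoy_self_eq_sum, aeval_eq_sum_range, natDegree_shiftedLegendre, mul_sum,
    ← Nat.sum_antidiagonal_swap]
  simp only [Prod.fst_swap, Prod.snd_swap]
  rw [Nat.sum_antidiagonal_eq_sum_range_succ
    (fun i j => ((m.choose j * (m + i).choose m : ℕ) : K) * y ^ j)]
  refine sum_congr rfl fun k hk => ?_
  have hkm : k ≤ m := Nat.lt_succ_iff.mp (mem_range.mp hk)
  have hsign : ((-1 : K) ^ k) * (-1) ^ k = 1 := by rw [← mul_pow]; norm_num
  rw [Nat.choose_symm hkm, pow_sub₀ y hy hkm, coeff_shiftedLegendre, zsmul_eq_mul]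
  push_cast
  rw [neg_pow y⁻¹, inv_pow]
  linear_combination -(((m.choose k : ℕ) : K) * ((m + k).choose m : ℕ) * y ^ m * (y ^ k)⁻¹) * hsign

theorem rook_eq_two_pow_mul_weightedDelannoy {K : Type*} [Field K] [NeZero (2 : K)]
    (P : ℤ → ℤ → K) (z : K) (h00 : P 0 0 = 1)
    (hneg : ∀ m n : ℤ, m < 0 ∨ n < 0 → P m n = 0)
    (hrec : ∀ m n : ℤ, 0 ≤ m → 0 ≤ n → (m, n) ≠ (0, 0) →
      P m n = 2 * P (m - 1) n + 2 * P m (n - 1) + z * P (m - 1) (n - 1))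
    (m n : ℕ) : P m n = 2 ^ (m + n) * weightedDelannoy (z / 4) m n := by
  let Q (m n : ℕ) : K := P m n
  have hcol (m : ℕ) : Q (m + 1) 0 = 2 * Q m 0 := by
    have := hrec (m + 1) 0 (by positivity) le_rfl (by simp; omega)
    simpa [Q, hneg _ (-1) (Or.inr (by norm_num))] using this
  have hrow (n : ℕ) : Q 0 (n + 1) = 2 * Q 0 n := by
    have := hrec 0 (n + 1) le_rfl (by positivity) (by simp; omega)
    simpa [Q, hneg (-1) _ (Or.inl (by norm_num))] using this
  have hsucc (m n : ℕ) : Q (m + 1) (n + 1) = 2 * Q m (n + 1) + 2 * Q (m + 1) n + z * Q m n := by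
    simpa [Q] using hrec (m + 1) (n + 1) (by positivity) (by positivity) (by simp; omega)
  have h4 : (4 : K) ≠ 0 := by
    simpa [show (4 : K) = 2 * 2 by norm_num] using NeZero.ne (2 : K)
  change Q m n = _
  induction m generalizing n with
  | zero =>
    induction n with
    | zero => simpa [Q, weightedDelannoy_zero_left] using h00
    | succ n ih =>
      rw [hrow, ih, weightedDelannoy_zero_left, weightedDelannoy_zero_left]
      ring
  | succ m ihm =>
    induction n with
    | zero =>
      rw [hcol, ihm, weightedDelannoy_zero_right, weightedDelannoy_zero_right]
      ring
    | succ n ihn =>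
      rw [hsucc, ihm, ihm, ihn, weightedDelannoy_succ_succ]
      field_simp
      ring

/-- For the rook polynomials `P m n` (defined by `P 0 0 = 1`, vanishing for negative
indices, and `P m n = 2 P (m-1) n + 2 P m (n-1) + z P (m-1) (n-1)`), the diagonal
satisfies `P m m z = z^m * L m (8/z + 1)` for `z ≠ 0`, where `L` is the sequence of
Legendre polynomials (characterized by `L 0 = 1`, `L 1 = id` and Bonnet's recurrence). -/
theorem rook_diagonal_eq_legendre
    (L : ℕ → ℂ → ℂ)
    (hL0 : ∀ x, L 0 x = 1)
    (hL1 : ∀ x, L 1 x = x)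
    (hLrec : ∀ (m : ℕ) (x : ℂ),
      (m + 2 : ℂ) * L (m + 2) x = (2 * m + 3) * x * L (m + 1) x - (m + 1 : ℂ) * L m x)
    (P : ℂ → ℤ → ℤ → ℂ)
    (h00 : ∀ z, P z 0 0 = 1)
    (hneg : ∀ z, ∀ m n : ℤ, m < 0 ∨ n < 0 → P z m n = 0)
    (hrec : ∀ z, ∀ m n : ℤ, 0 ≤ m → 0 ≤ n → (m, n) ≠ (0, 0) →
      P z m n = 2 * P z (m - 1) n + 2 * P z m (n - 1) + z * P z (m - 1) (n - 1)) :
    ∀ (m : ℕ) (z : ℂ), z ≠ 0 → P z m m = z ^ m * L m (8 / z + 1) := by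
  intro m z hz
  have harg : (1 - (8 / z + 1)) / 2 = -(z / 4)⁻¹ := by field_simp; ring
  have hscale : (2 : ℂ) ^ (m + m) * (z / 4) ^ m = z ^ m := by
    rw [← two_mul, pow_mul, ← mul_pow]
    congr 1
    ring
  rw [rook_eq_two_pow_mul_weightedDelannoy (P z) z (h00 z) (hneg z) (hrec z),
    weightedDelannoy_self_eq_aeval_shiftedLegendre (by simpa using hz),
    eq_aeval_shiftedLegendre_of_recurrence L hL0 hL1 hLrec, harg, ← mul_assoc, hscale]
end

section
/- For every real z < -9/4, the quartic polynomial D(t,z) = z^2 t^4 + (-2z-36) t^3 + (49-2z) t^2 - 14t + 1 has four distinct complex roots, none of which is real. -/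
/-!
Write `z = -(p² + 9/4)` with `p ≠ 0` and put `a = p + 3i/2`, so that `|a|² = -z`. Then
`D(t) = q(t) · conj (q (conj t))` with `q(t) = (a t - i)² + 4t = a² t² + (4 - 2ai) t - 1`, so the
roots of `D` are the roots `r₁, r₂` of `q` together with their conjugates. The discriminant
`16 (5/2 - p i)` of `q` is nonzero, so `r₁ ≠ r₂`. For real `x`, `Im q(x) = p x (3x - 2)` vanishes
only at `x = 0` and `x = 2/3`, where `Re q(x)` is `-1` and `4p²/9 + 8/3`; so `r₁, r₂` are not real.
Finally `r₁ = conj r₂` would make `r₁ r₂ = -1/a²` real, but `Im a² = 3p ≠ 0`.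
-/

open Complex ComplexConjugate

theorem exists_quadratic_eq_mul_sub_mul_sub {K : Type*} [Field K] [IsAlgClosed K]
    [NeZero (2 : K)] {a b c : K} (ha : a ≠ 0) (hd : discrim a b c ≠ 0) :
    ∃ r₁ r₂ : K, r₁ ≠ r₂ ∧ ∀ x, a * (x * x) + b * x + c = a * (x - r₁) * (x - r₂) := by
  obtain ⟨s, hs⟩ := IsAlgClosed.exists_eq_mul_self (discrim a b c)
  have h2 : (2 : K) ≠ 0 := two_ne_zero
  refine ⟨(-b + s) / (2 * a), (-b - s) / (2 * a), fun h => ?_, fun x => ?_⟩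
  · field_simp at h
    have hs0 : s = 0 := (mul_eq_zero.mp (by linear_combination h : (2 : K) * s = 0)).resolve_left h2
    exact hd (by rw [hs, hs0, mul_zero])
  · rw [discrim] at hs
    field_simp
    linear_combination (-1 : K) * hs

theorem Complex.pairwise_ne_of_ne_conj {r₁ r₂ : ℂ} (h₁₂ : r₁ ≠ r₂) (h₁ : r₁.im ≠ 0)
    (h₂ : r₂.im ≠ 0) (h : r₁ ≠ conj r₂) :
    r₁ ≠ r₂ ∧ r₁ ≠ conj r₁ ∧ r₁ ≠ conj r₂ ∧ r₂ ≠ conj r₁ ∧ r₂ ≠ conj r₂ ∧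
      conj r₁ ≠ conj r₂ := by
  refine ⟨h₁₂, fun h' => h₁ (conj_eq_iff_im.mp h'.symm), h, fun h' => h ?_,
    fun h' => h₂ (conj_eq_iff_im.mp h'.symm), (RingHom.injective _).ne h₁₂⟩
  rw [h', conj_conj]

noncomputable def queenQuartic (z : ℝ) (t : ℂ) : ℂ :=
  (z : ℂ) ^ 2 * t ^ 4 + (-2 * z - 36) * t ^ 3 + (49 - 2 * z) * t ^ 2 - 14 * t + 1

noncomputable def queenQuadratic (p : ℝ) (t : ℂ) : ℂ :=
  ((p + 3 / 2 * I) * t - I) ^ 2 + 4 * t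

theorem exists_queenQuadratic_eq_mul_sub_mul_sub (p : ℝ) :
    ∃ r₁ r₂ : ℂ, r₁ ≠ r₂ ∧
      ∀ t, queenQuadratic p t = (p + 3 / 2 * I) ^ 2 * (t - r₁) * (t - r₂) := by
  have ha : (p + 3 / 2 * I : ℂ) ^ 2 ≠ 0 := pow_ne_zero _ fun h => by
    simpa using congrArg im h
  have hdiscrim : discrim ((p + 3 / 2 * I : ℂ) ^ 2) (4 - 2 * (p + 3 / 2 * I) * I) (-1)
      = 16 * (5 / 2 - p * I) := by
    rw [discrim]
    linear_combination (4 * (p + 3 / 2 * I : ℂ) ^ 2 - 24) * I_sq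
  obtain ⟨r₁, r₂, hne, hr⟩ := exists_quadratic_eq_mul_sub_mul_sub ha (by
    rw [hdiscrim]
    intro h
    simpa using congrArg re h)
  refine ⟨r₁, r₂, hne, fun t => ?_⟩
  rw [← hr, queenQuadratic]
  linear_combination I_sq

theorem queenQuadratic_ofReal_ne_zero {p : ℝ} (hp : p ≠ 0) (x : ℝ) :
    queenQuadratic p x ≠ 0 := by
  have hre : (queenQuadratic p x).re = p ^ 2 * x ^ 2 - (3 / 2 * x - 1) ^ 2 + 4 * x := by
    simp [queenQuadratic, pow_two]
    ring
  have him : (queenQuadratic p x).im = p * (x * (3 * x - 2)) := by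
    simp [queenQuadratic, pow_two]
    ring
  intro h
  rw [h, zero_re] at hre
  rw [h, zero_im] at him
  rcases mul_eq_zero.mp ((mul_eq_zero.mp him.symm).resolve_left hp) with rfl | hx
  · norm_num at hre
  · rw [show x = 2 / 3 by linarith] at hre
    nlinarith [sq_nonneg p]

theorem im_ne_zero_of_queenQuadratic_eq_zero {p : ℝ} (hp : p ≠ 0) {r : ℂ}
    (hr : queenQuadratic p r = 0) : r.im ≠ 0 := fun him =>
  queenQuadratic_ofReal_ne_zero hp r.re (by rwa [conj_eq_iff_re.mp (conj_eq_iff_im.mpr him)])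

theorem ne_conj_of_queenQuadratic_eq_mul_sub_mul_sub {p : ℝ} (hp : p ≠ 0) {r₁ r₂ : ℂ}
    (hq : ∀ t, queenQuadratic p t = (p + 3 / 2 * I) ^ 2 * (t - r₁) * (t - r₂)) :
    r₁ ≠ conj r₂ := by
  intro h
  have h0 : (p + 3 / 2 * I : ℂ) ^ 2 * (normSq r₂ : ℂ) = -1 := by
    have := hq 0
    rw [normSq_eq_conj_mul_self]
    simp only [queenQuadratic, h, mul_zero, zero_sub, add_zero, neg_sq, I_sq] at this
    linear_combination -this
  have him_sq : ((p + 3 / 2 * I : ℂ) ^ 2).im = 3 * p := by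
    simp [pow_two]
    ring
  have hn : normSq r₂ = 0 := by
    have := congrArg im h0
    rw [im_mul_ofReal, him_sq, neg_im, one_im, neg_zero] at this
    exact (mul_eq_zero.mp this).resolve_left (by simpa using hp)
  simp [hn] at h0

theorem queenQuartic_eq_mul_conj (p : ℝ) (t : ℂ) :
    queenQuartic (-(p ^ 2 + 9 / 4)) t = queenQuadratic p t * conj (queenQuadratic p (conj t)) := by
  simp only [queenQuartic, queenQuadratic, map_add, map_mul, map_sub, map_pow, conj_conj,
    conj_ofReal, conj_I, map_ofNat, map_div₀]
  push_cast
  ring_nf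
  simp only [I_sq, I_pow_four]
  ring

/-- For every real `z < -9/4`, the quartic
`D(t,z) = z²t⁴ + (-2z-36)t³ + (49-2z)t² - 14t + 1` has four distinct complex roots,
none of which is real. -/
theorem queen_quartic_roots_distinct_nonreal (z : ℝ) (hz : z < -9/4) :
    ∃ t₁ t₂ t₃ t₄ : ℂ,
      (∀ t : ℂ,
        (z : ℂ) ^ 2 * t ^ 4 + (-2 * z - 36) * t ^ 3 + (49 - 2 * z) * t ^ 2 - 14 * t + 1
          = (z : ℂ) ^ 2 * (t - t₁) * (t - t₂) * (t - t₃) * (t - t₄)) ∧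
      t₁ ≠ t₂ ∧ t₁ ≠ t₃ ∧ t₁ ≠ t₄ ∧ t₂ ≠ t₃ ∧ t₂ ≠ t₄ ∧ t₃ ≠ t₄ ∧
      t₁.im ≠ 0 ∧ t₂.im ≠ 0 ∧ t₃.im ≠ 0 ∧ t₄.im ≠ 0 := by
  obtain ⟨p, hp, rfl⟩ : ∃ p : ℝ, p ≠ 0 ∧ z = -(p ^ 2 + 9 / 4) :=
    ⟨√(-z - 9 / 4), (Real.sqrt_pos.mpr (by linarith)).ne', by rw [Real.sq_sqrt (by linarith)]; ring⟩
  obtain ⟨r₁, r₂, h₁₂, hq⟩ := exists_queenQuadratic_eq_mul_sub_mul_sub p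
  have him₁ := im_ne_zero_of_queenQuadratic_eq_zero hp (r := r₁) (by simp [hq])
  have him₂ := im_ne_zero_of_queenQuadratic_eq_zero hp (r := r₂) (by simp [hq])
  obtain ⟨h12, h13, h14, h23, h24, h34⟩ := Complex.pairwise_ne_of_ne_conj h₁₂ him₁ him₂
    (ne_conj_of_queenQuadratic_eq_mul_sub_mul_sub hp hq)
  refine ⟨r₁, r₂, conj r₁, conj r₂, fun t => ?_, h12, h13, h14, h23, h24, h34, him₁, him₂,
    by simpa using him₁, by simpa using him₂⟩
  have hlead : (p + 3 / 2 * I : ℂ) ^ 2 * conj ((p + 3 / 2 * I : ℂ) ^ 2) = (p ^ 2 + 9 / 4) ^ 2 := by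
    simp only [map_pow, map_add, map_mul, conj_ofReal, conj_I, map_div₀, map_ofNat]
    linear_combination (-9 / 4 * (2 * p ^ 2 + 9 / 4 - 9 / 4 * I ^ 2) : ℂ) * I_sq
  calc queenQuartic (-(p ^ 2 + 9 / 4)) t
      = queenQuadratic p t * conj (queenQuadratic p (conj t)) := queenQuartic_eq_mul_conj p t
    _ = _ := by
      simp only [hq, map_mul, map_sub, conj_conj]
      push_cast
      linear_combination (t - r₁) * (t - r₂) * (t - conj r₁) * (t - conj r₂) * hlead
end

section
/- For real z < -9/4, if the four (non-real) complex roots of D(t,z) = z^2 t^4 + (-2z-36) t^3 + (49-2z) t^2 - 14t + 1 are written as r e^{±iθ} and ρ e^{±iφ} with r, ρ > 0, then r ≠ ρ; i.e., the two conjugate pairs of roots have distinct moduli. -/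
/-!
If the two conjugate pairs had a common modulus `r`, all four roots would be `r` times numbers
whose pairwise products are `1`, so the normalised quartic would satisfy `e₄ = r⁴` and
`e₃ = r² e₁`. For `D(t,z)` these read `z² r⁴ = 1` and `14 = r² (2z + 36)`; as `z < 0` the first
gives `z r² = -1`, and then the second forces `z = -9/4`.
-/

open Complex

theorem quartic_coeffs_eq_of_forall_eq {K : Type*} [Field K] [CharZero K]
    {a₄ a₃ a₂ a₁ a₀ b₄ b₃ b₂ b₁ b₀ : K}
    (h : ∀ t : K, a₄ * t ^ 4 + a₃ * t ^ 3 + a₂ * t ^ 2 + a₁ * t + a₀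
      = b₄ * t ^ 4 + b₃ * t ^ 3 + b₂ * t ^ 2 + b₁ * t + b₀) :
    a₄ = b₄ ∧ a₃ = b₃ ∧ a₂ = b₂ ∧ a₁ = b₁ ∧ a₀ = b₀ := by
  have h0 := h 0
  have h1 := h 1
  have hm1 := h (-1)
  have h2 := h 2
  have hm2 := h (-2)
  refine ⟨?_, ?_, ?_, ?_, ?_⟩
  · linear_combination (h2 + hm2 - 4 * (h1 + hm1) + 6 * h0) / 24
  · linear_combination (h2 - hm2 - 2 * (h1 - hm1)) / 12
  · linear_combination (16 * (h1 + hm1) - (h2 + hm2) - 30 * h0) / 24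
  · linear_combination (8 * (h1 - hm1) - (h2 - hm2)) / 12
  · linear_combination h0

theorem mul_sub_roots_eq_of_reciprocal_pairs {R : Type*} [CommRing R] {A B C D : R}
    (hAB : A * B = 1) (hCD : C * D = 1) (r t : R) :
    (t - r * A) * (t - r * B) * (t - r * C) * (t - r * D)
      = t ^ 4 - r * (A + B + C + D) * t ^ 3 + r ^ 2 * (2 + (A + B) * (C + D)) * t ^ 2
        - r ^ 3 * (A + B + C + D) * t + r ^ 4 := by
  linear_combination (r ^ 2 * t ^ 2 - r ^ 3 * (C + D) * t + r ^ 4 * C * D) * hAB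
    + (r ^ 2 * t ^ 2 - r ^ 3 * (A + B) * t + r ^ 4) * hCD

theorem exp_ofReal_mul_I_mul_exp_neg (θ : ℝ) :
    exp (θ * I) * exp (-θ * I) = 1 := by
  rw [neg_mul, Complex.exp_neg, mul_inv_cancel₀ (Complex.exp_ne_zero _)]

theorem eq_neg_nine_fourths_of_sq_mul_pow_four_eq_one {z r : ℝ} (hz : z ≤ 0)
    (hprod : z ^ 2 * r ^ 4 = 1) (hlin : r ^ 2 * (2 * z + 36) = 14) : z = -9 / 4 := by
  have hzr : z * r ^ 2 = -1 := by
    have hnonpos : z * r ^ 2 ≤ 0 := mul_nonpos_of_nonpos_of_nonneg hz (sq_nonneg r)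
    have hsq : (z * r ^ 2 - 1) * (z * r ^ 2 + 1) = 0 := by linear_combination hprod
    rcases mul_eq_zero.mp hsq with h | h
    · linarith
    · linarith
  linear_combination ((2 * z + 36) * hzr - z * hlin) / 16

theorem queen_quartic_moduli_distinct_general (z : ℝ) (hz : z < -9/4)
    (r ρ θ φ : ℝ)
    (hfac : ∀ t : ℂ,
      (z : ℂ) ^ 2 * t ^ 4 + (-2 * z - 36) * t ^ 3 + (49 - 2 * z) * t ^ 2 - 14 * t + 1
        = (z : ℂ) ^ 2 * (t - r * Complex.exp (θ * Complex.I))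
            * (t - r * Complex.exp (-θ * Complex.I))
            * (t - ρ * Complex.exp (φ * Complex.I))
            * (t - ρ * Complex.exp (-φ * Complex.I))) :
    r ≠ ρ := by
  rintro rfl
  have hexpand := mul_sub_roots_eq_of_reciprocal_pairs (exp_ofReal_mul_I_mul_exp_neg θ)
    (exp_ofReal_mul_I_mul_exp_neg φ) (r : ℂ)
  set s := exp (θ * I) + exp (-θ * I) + exp (φ * I) + exp (-φ * I)
  set e := 2 + (exp (θ * I) + exp (-θ * I)) * (exp (φ * I) + exp (-φ * I))
  obtain ⟨-, h₃, -, h₁, h₀⟩ := quartic_coeffs_eq_of_forall_eq fun t : ℂ =>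
    show (z : ℂ) ^ 2 * t ^ 4 + (-2 * z - 36) * t ^ 3 + (49 - 2 * z) * t ^ 2 + (-14) * t + 1
      = (z : ℂ) ^ 2 * t ^ 4 + (-((z : ℂ) ^ 2 * r * s)) * t ^ 3 + (z : ℂ) ^ 2 * r ^ 2 * e * t ^ 2
        + (-((z : ℂ) ^ 2 * r ^ 3 * s)) * t + (z : ℂ) ^ 2 * r ^ 4 by
      linear_combination hfac t + (z : ℂ) ^ 2 * hexpand t
  have hprod : z ^ 2 * r ^ 4 = 1 := by exact_mod_cast h₀.symm
  have hlin : r ^ 2 * (2 * z + 36) = 14 := by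
    exact_mod_cast (by linear_combination h₁ - r ^ 2 * h₃ : (r : ℂ) ^ 2 * (2 * z + 36) = 14)
  linarith [eq_neg_nine_fourths_of_sq_mul_pow_four_eq_one (by linarith) hprod hlin]

/-- For real `z < -9/4`, if the four non-real roots of
`D(t,z) = z²t⁴ + (-2z-36)t³ + (49-2z)t² - 14t + 1` are written as `r e^{±iθ}` and
`ρ e^{±iφ}` with `r, ρ > 0`, then `r ≠ ρ`. -/
theorem queen_quartic_moduli_distinct (z : ℝ) (hz : z < -9/4)
    (r ρ θ φ : ℝ) (hr : 0 < r) (hρ : 0 < ρ)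
    (ht₁ : ((r : ℂ) * Complex.exp (θ * Complex.I)).im ≠ 0)
    (ht₃ : ((ρ : ℂ) * Complex.exp (φ * Complex.I)).im ≠ 0)
    (hfac : ∀ t : ℂ,
      (z : ℂ) ^ 2 * t ^ 4 + (-2 * z - 36) * t ^ 3 + (49 - 2 * z) * t ^ 2 - 14 * t + 1
        = (z : ℂ) ^ 2 * (t - r * Complex.exp (θ * Complex.I))
            * (t - r * Complex.exp (-θ * Complex.I))
            * (t - ρ * Complex.exp (φ * Complex.I))
            * (t - ρ * Complex.exp (-φ * Complex.I))) :
    r ≠ ρ :=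
  queen_quartic_moduli_distinct_general z hz r ρ θ φ hfac
end

section
/- Let z < -9/4 and let t_1, t_3 be the upper-half-plane roots of D(t,z) with |t_1| < |t_3|, and t_2 = \bar{t_1}, t_4 = \bar{t_3}. Then for every natural number m, |A/t_1^{m+1}| > |C/t_3^{m+1}|, where A = 1/((t_1-t_2)(t_1-t_3)(t_1-t_4)) and C = 1/((t_3-t_1)(t_3-t_2)(t_3-t_4)). -/
/-!
Everything rests on `|Im t₁| < |Im t₃|`: the moduli of the two terms are
`1 / (2 |Im tᵢ| ‖t₁ - t₃‖ ‖t₁ - t̄₃‖ ‖tᵢ‖^(m+1))` for `i = 1, 3`.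
Write `tᵢ = aᵢ + i bᵢ`, `Rᵢ = |tᵢ|²` and `u = z² (R₁ + R₃)`. Eliminating `a₁, a₃` from the
Vieta relations of `D` leaves the cubic `(u - 2z - 9)(u² + (4z - 40)u + 4z² - 16z + 144) = 0`.
Since `z² R₁ R₃ = 1`, `u + 2z = z² R₃ (z R₁ + 1)² > 0`, so for `z < -9/4` the first factor
does not vanish, and the quadratic turns
`z⁶ (R₃ - R₁)(b₃² - b₁²) = (4z + 9)(6 - z)((z - 6)u + 2z²)` into a positive quantity.
-/

open Complex ComplexConjugate

theorem quartic_coeffs_eq {K : Type*} [Field K] [CharZero K] {a₀ a₁ a₂ a₃ a₄ b₀ b₁ b₂ b₃ b₄ : K}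
    (h : ∀ x : K, a₄ * x ^ 4 + a₃ * x ^ 3 + a₂ * x ^ 2 + a₁ * x + a₀
      = b₄ * x ^ 4 + b₃ * x ^ 3 + b₂ * x ^ 2 + b₁ * x + b₀) :
    a₀ = b₀ ∧ a₁ = b₁ ∧ a₂ = b₂ ∧ a₃ = b₃ ∧ a₄ = b₄ := by
  have h0 := h 0
  have h1 := h 1
  have hm1 := h (-1)
  have h2 := h 2
  have hm2 := h (-2)
  refine ⟨?_, ?_, ?_, ?_, ?_⟩
  · linear_combination h0
  · linear_combination (2/3) * h1 - (2/3) * hm1 - (1/12) * h2 + (1/12) * hm2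
  · linear_combination -(5/4) * h0 + (2/3) * h1 + (2/3) * hm1 - (1/24) * h2 - (1/24) * hm2
  · linear_combination -(1/6) * h1 + (1/6) * hm1 + (1/12) * h2 - (1/12) * hm2
  · linear_combination (1/4) * h0 - (1/6) * h1 - (1/6) * hm1 + (1/24) * h2 + (1/24) * hm2

theorem Complex.ofReal_sub_mul_ofReal_sub_conj (x : ℝ) (t : ℂ) :
    ((x : ℂ) - t) * ((x : ℂ) - conj t) = ((x ^ 2 - 2 * t.re * x + normSq t : ℝ) : ℂ) := by
  apply Complex.ext <;> simp [normSq_apply, pow_two] <;> ring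

/-- Coefficient comparison in `D(x, z) = z² (x² - 2ax + R₁)(x² - 2cx + R₃)`; for the roots
`a ± bi`, `c ± di` of `D` one has `R₁ = a² + b²` and `R₃ = c² + d²`. -/
structure DVieta (z a c R₁ R₃ : ℝ) : Prop where
  coeff_three : z ^ 2 * (a + c) = z + 18
  coeff_two : z ^ 2 * (R₁ + R₃ + 4 * a * c) = 49 - 2 * z
  coeff_one : z ^ 2 * (a * R₃ + c * R₁) = 7
  coeff_zero : z ^ 2 * (R₁ * R₃) = 1

namespace DVieta

variable {z a c R₁ R₃ : ℝ}

theorem neg_two_mul_lt (h : DVieta z a c R₁ R₃) (hR₁ : 0 < R₁) (hR : R₁ < R₃) :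
    -2 * z < z ^ 2 * (R₁ + R₃) := by
  have hz : z ≠ 0 := by rintro rfl; simpa using h.coeff_zero
  have hzR₁ : z * R₁ + 1 ≠ 0 := by
    intro h0
    have : z * R₃ + 1 = 0 := by linear_combination z * R₃ * h0 - h.coeff_zero
    exact hR.ne (mul_left_cancel₀ hz (by linarith))
  have key : z ^ 2 * (R₁ + R₃) + 2 * z = z ^ 2 * R₃ * (z * R₁ + 1) ^ 2 := by
    linear_combination (-(z ^ 2 * R₁) - 2 * z) * h.coeff_zero
  have : 0 < z ^ 2 * R₃ * (z * R₁ + 1) ^ 2 :=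
    mul_pos (mul_pos (sq_pos_of_ne_zero hz) (hR₁.trans hR)) (sq_pos_of_ne_zero hzR₁)
  linarith

theorem sub_mul_sub_eq (h : DVieta z a c R₁ R₃) :
    z ^ 4 * ((c - a) * (R₃ - R₁)) = (z + 18) * (z ^ 2 * (R₁ + R₃)) - 14 * z ^ 2 := by
  linear_combination (z ^ 2 * (R₁ + R₃)) * h.coeff_three - 2 * z ^ 2 * h.coeff_one

theorem sub_sq_eq (h : DVieta z a c R₁ R₃) :
    z ^ 4 * (c - a) ^ 2 = (z + 18) ^ 2 + z ^ 2 * (z ^ 2 * (R₁ + R₃)) - (49 - 2 * z) * z ^ 2 := by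
  linear_combination (z ^ 2 * (a + c) + z + 18) * h.coeff_three - z ^ 2 * h.coeff_two

theorem sub_sq_eq' (h : DVieta z a c R₁ R₃) :
    z ^ 4 * (R₃ - R₁) ^ 2 = (z ^ 2 * (R₁ + R₃)) ^ 2 - 4 * z ^ 2 := by
  linear_combination -4 * z ^ 2 * h.coeff_zero

-- The square of `sub_mul_sub_eq` is the product of `sub_sq_eq` and `sub_sq_eq'`.
theorem cubic_eq_zero (h : DVieta z a c R₁ R₃) :
    z ^ 2 * (z ^ 2 * (R₁ + R₃) - 2 * z - 9) * ((z ^ 2 * (R₁ + R₃)) ^ 2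
      + (4 * z - 40) * (z ^ 2 * (R₁ + R₃)) + 4 * z ^ 2 - 16 * z + 144) = 0 := by
  set u := z ^ 2 * (R₁ + R₃)
  linear_combination -(u ^ 2 - 4 * z ^ 2) * h.sub_sq_eq - z ^ 4 * (c - a) ^ 2 * h.sub_sq_eq'
    + (z ^ 4 * ((c - a) * (R₃ - R₁)) + (z + 18) * u - 14 * z ^ 2) * h.sub_mul_sub_eq

theorem quadratic_eq_zero (h : DVieta z a c R₁ R₃) (hz : z < -9 / 4) (hR₁ : 0 < R₁)
    (hR : R₁ < R₃) :
    (z ^ 2 * (R₁ + R₃)) ^ 2 + (4 * z - 40) * (z ^ 2 * (R₁ + R₃)) + 4 * z ^ 2 - 16 * z + 144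
      = 0 := by
  -- `z² (R₁ + R₃) - 2z - 9 > -4z - 9 > 0`: this is where `z < -9/4` enters.
  have hu := h.neg_two_mul_lt hR₁ hR
  refine (mul_eq_zero.1 h.cubic_eq_zero).resolve_left (mul_ne_zero ?_ ?_)
  · exact pow_ne_zero 2 (by linarith : z < 0).ne
  · linarith

theorem sub_sq_lt_sub_sq (h : DVieta z a c R₁ R₃) (hz : z < -9 / 4) (hR₁ : 0 < R₁)
    (hR : R₁ < R₃) :
    R₁ - a ^ 2 < R₃ - c ^ 2 := by
  set u := z ^ 2 * (R₁ + R₃)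
  have hu : -2 * z < u := h.neg_two_mul_lt hR₁ hR
  have key : z ^ 6 * (R₃ - R₁) * ((R₃ - c ^ 2) - (R₁ - a ^ 2))
      = (4 * z + 9) * (6 - z) * ((z - 6) * u + 2 * z ^ 2) := by
    linear_combination z ^ 2 * h.sub_sq_eq' - z ^ 2 * (a + c) * h.sub_mul_sub_eq
      - ((z + 18) * u - 14 * z ^ 2) * h.coeff_three + z ^ 2 * h.quadratic_eq_zero hz hR₁ hR
  have hrhs : 0 < (4 * z + 9) * (6 - z) * ((z - 6) * u + 2 * z ^ 2) := by
    refine mul_pos_of_neg_of_neg (mul_neg_of_neg_of_pos (by linarith) (by linarith)) ?_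
    nlinarith
  have hz₀ : z ≠ 0 := by linarith
  have hz6 : 0 < z ^ 6 * (R₃ - R₁) := mul_pos (by positivity) (by linarith)
  rw [← key] at hrhs
  linarith [pos_of_mul_pos_right hrhs hz6.le]

end DVieta

theorem dVieta_of_factorization {z : ℝ} {t₁ t₃ : ℂ}
    (hfac : ∀ t : ℂ,
      (z : ℂ) ^ 2 * t ^ 4 + (-2 * z - 36) * t ^ 3 + (49 - 2 * z) * t ^ 2 - 14 * t + 1
        = (z : ℂ) ^ 2 * (t - t₁) * (t - conj t₁) * (t - t₃) * (t - conj t₃)) :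
    DVieta z t₁.re t₃.re (normSq t₁) (normSq t₃) := by
  have hreal : ∀ x : ℝ,
      z ^ 2 * x ^ 4 + (-2 * z - 36) * x ^ 3 + (49 - 2 * z) * x ^ 2 - 14 * x + 1
        = z ^ 2 * (x ^ 2 - 2 * t₁.re * x + normSq t₁) * (x ^ 2 - 2 * t₃.re * x + normSq t₃) := by
    intro x
    apply ofReal_injective
    rw [ofReal_mul, ofReal_mul, ← ofReal_sub_mul_ofReal_sub_conj,
      ← ofReal_sub_mul_ofReal_sub_conj]
    push_cast
    linear_combination hfac x
  obtain ⟨h₀, h₁, h₂, h₃, -⟩ := quartic_coeffs_eq fun x : ℝ ↦ show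
      z ^ 2 * x ^ 4 + (-2 * z - 36) * x ^ 3 + (49 - 2 * z) * x ^ 2 + (-14) * x + 1
        = z ^ 2 * x ^ 4 + (-2 * z ^ 2 * (t₁.re + t₃.re)) * x ^ 3
          + z ^ 2 * (normSq t₁ + normSq t₃ + 4 * t₁.re * t₃.re) * x ^ 2
          + (-2 * z ^ 2 * (t₁.re * normSq t₃ + t₃.re * normSq t₁)) * x
          + z ^ 2 * (normSq t₁ * normSq t₃) by linear_combination hreal x
  exact ⟨by linarith, by linarith, by linarith, by linarith⟩

theorem Complex.norm_sub_conj (t : ℂ) : ‖t - conj t‖ = 2 * |t.im| := by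
  rw [sub_conj, norm_mul, norm_real, norm_I, Real.norm_eq_abs, abs_mul, abs_two, mul_one]

theorem norm_partialFraction_lt {t₁ t₃ : ℂ} (h₁ : t₁.im ≠ 0) (him : t₁.im ^ 2 < t₃.im ^ 2)
    (hnorm : ‖t₁‖ < ‖t₃‖) (m : ℕ) :
    ‖(1 / ((t₃ - t₁) * (t₃ - conj t₁) * (t₃ - conj t₃))) / t₃ ^ (m + 1)‖
      < ‖(1 / ((t₁ - conj t₁) * (t₁ - t₃) * (t₁ - conj t₃))) / t₁ ^ (m + 1)‖ := by
  have hK : 0 < ‖t₁ - t₃‖ := norm_pos_iff.2 (sub_ne_zero.2 (ne_of_apply_ne norm hnorm.ne))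
  have hL : 0 < ‖t₁ - conj t₃‖ := by
    refine norm_pos_iff.2 (sub_ne_zero.2 fun h ↦ him.ne ?_)
    rw [h, conj_im, neg_sq]
  have hL' : ‖t₃ - conj t₁‖ = ‖t₁ - conj t₃‖ := by
    rw [← norm_conj, map_sub, conj_conj, norm_sub_rev]
  have him' : |t₁.im| < |t₃.im| := sq_lt_sq.1 him
  have hb : 0 < |t₁.im| := abs_pos.2 h₁
  have hr : 0 < ‖t₁‖ := norm_pos_iff.2 fun h ↦ h₁ (by simp [h])
  simp only [norm_div, norm_mul, norm_pow, norm_one, norm_sub_conj, norm_sub_rev t₃ t₁, hL',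
    div_div]
  gcongr 1 / ?_
  calc 2 * |t₁.im| * ‖t₁ - t₃‖ * ‖t₁ - conj t₃‖ * ‖t₁‖ ^ (m + 1)
      < 2 * |t₃.im| * ‖t₁ - t₃‖ * ‖t₁ - conj t₃‖ * ‖t₃‖ ^ (m + 1) := by gcongr
    _ = _ := by ring

theorem queen_dominant_term_general (z : ℝ) (hz : z < -9/4) (t₁ t₃ : ℂ)
    (h1 : 0 < t₁.im)
    (habs : ‖t₁‖ < ‖t₃‖)
    (hfac : ∀ t : ℂ,
      (z : ℂ) ^ 2 * t ^ 4 + (-2 * z - 36) * t ^ 3 + (49 - 2 * z) * t ^ 2 - 14 * t + 1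
        = (z : ℂ) ^ 2 * (t - t₁) * (t - (starRingEnd ℂ) t₁)
            * (t - t₃) * (t - (starRingEnd ℂ) t₃)) :
    ∀ m : ℕ,
      ‖((1 / ((t₁ - (starRingEnd ℂ) t₁) * (t₁ - t₃) * (t₁ - (starRingEnd ℂ) t₃)))
            / t₁ ^ (m + 1))‖
      > ‖((1 / ((t₃ - t₁) * (t₃ - (starRingEnd ℂ) t₁) * (t₃ - (starRingEnd ℂ) t₃)))
            / t₃ ^ (m + 1))‖ := by
  have hR₁ : 0 < normSq t₁ := normSq_pos.2 fun h ↦ by simp [h] at h1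
  have hR : normSq t₁ < normSq t₃ := by
    rw [normSq_eq_norm_sq, normSq_eq_norm_sq]
    gcongr
  have him : t₁.im ^ 2 < t₃.im ^ 2 := by
    have := (dVieta_of_factorization hfac).sub_sq_lt_sub_sq hz hR₁ hR
    rw [normSq_apply, normSq_apply] at this
    linarith
  exact norm_partialFraction_lt h1.ne' him habs

/-- For real `z < -9/4` with conjugate root pairs `t₁ = conj t₂`, `t₃ = conj t₄` of
`D(t,z)`, `t₁, t₃` in the upper half-plane and `|t₁| < |t₃|`, for every `m : ℕ` the
partial fraction terms satisfy `|A/t₁^{m+1}| > |C/t₃^{m+1}|`. -/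
theorem queen_dominant_term (z : ℝ) (hz : z < -9/4) (t₁ t₃ : ℂ)
    (h1 : 0 < t₁.im) (h3 : 0 < t₃.im)
    (habs : ‖t₁‖ < ‖t₃‖)
    (hfac : ∀ t : ℂ,
      (z : ℂ) ^ 2 * t ^ 4 + (-2 * z - 36) * t ^ 3 + (49 - 2 * z) * t ^ 2 - 14 * t + 1
        = (z : ℂ) ^ 2 * (t - t₁) * (t - (starRingEnd ℂ) t₁)
            * (t - t₃) * (t - (starRingEnd ℂ) t₃)) :
    ∀ m : ℕ,
      ‖((1 / ((t₁ - (starRingEnd ℂ) t₁) * (t₁ - t₃) * (t₁ - (starRingEnd ℂ) t₃)))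
            / t₁ ^ (m + 1))‖
      > ‖((1 / ((t₃ - t₁) * (t₃ - (starRingEnd ℂ) t₁) * (t₃ - (starRingEnd ℂ) t₃)))
            / t₃ ^ (m + 1))‖ :=
  queen_dominant_term_general z hz t₁ t₃ h1 habs hfac
end

section
/- Let z < -9/4 and let t_1 = \bar{t_2}, t_3 = \bar{t_4} be the conjugate pairs of roots of D(t,z), with t_1, t_3 in the upper half-plane and |t_1| < |t_3|. Writing Arg(t_1) = θ and Arg(t_3) = φ, we have sin φ ≠ sin θ; in particular neither φ = θ nor φ = π - θ holds. -/
open Complex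

/-!
Write `r = ‖t₁‖`, `ρ = ‖t₃‖`, `θ = arg t₁`, `φ = arg t₃`. Vieta gives
`z² (2r cos θ + 2ρ cos φ) = 2z + 36` and `z² r² ρ² = 1`, hence `z r ρ = -1` as `z < 0`, which
turns the `t`-coefficient identity into `z (2r cos φ + 2ρ cos θ) = -14`. Equal sines force
`cos φ = ± cos θ`. If `cos φ = cos θ` the two bracketed sums coincide and `-14 z = 2z + 36`;
if `cos φ = -cos θ` they are opposite and `14 z = 2z + 36`. Neither is possible for `z < -9/4`.
-/

theorem Complex.quartic_vieta {a b c d e u u' v v' : ℂ}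
    (h : ∀ t : ℂ, a * t ^ 4 + b * t ^ 3 + c * t ^ 2 + d * t + e
      = a * (t - u) * (t - u') * (t - v) * (t - v')) :
    b = -a * ((u + u') + (v + v')) ∧
    d = -a * (u * u' * (v + v') + (u + u') * (v * v')) ∧
    e = a * (u * u' * (v * v')) := by
  refine ⟨?_, ?_, ?_⟩
  · linear_combination (h 2 - h (-2) - 2 * h 1 + 2 * h (-1)) / 12
  · linear_combination (8 * h 1 - 8 * h (-1) - h 2 + h (-2)) / 12
  · linear_combination h 0

theorem Real.cos_eq_or_cos_eq_neg_of_sin_eq {x y : ℝ} (h : Real.sin x = Real.sin y) :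
    Real.cos x = Real.cos y ∨ Real.cos x = -Real.cos y := by
  rw [← sq_eq_sq_iff_eq_or_eq_neg, Real.cos_sq', Real.cos_sq', h]

theorem mul_eq_neg_one_of_sq_mul_sq_eq_one {z w : ℝ} (hz : z < 0) (hw : 0 ≤ w)
    (h : z ^ 2 * w ^ 2 = 1) : z * w = -1 := by
  have hzw : z * w ≤ 0 := mul_nonpos_of_nonpos_of_nonneg hz.le hw
  rcases sq_eq_sq_iff_eq_or_eq_neg.mp (show (z * w) ^ 2 = 1 ^ 2 by linear_combination h)
    with h1 | h1 <;> linarith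

theorem queen_vieta_polar {z : ℝ} (hz : z < 0) {t₁ t₃ : ℂ}
    (hfac : ∀ t : ℂ,
      (z : ℂ) ^ 2 * t ^ 4 + (-2 * z - 36) * t ^ 3 + (49 - 2 * z) * t ^ 2 - 14 * t + 1
        = (z : ℂ) ^ 2 * (t - t₁) * (t - (starRingEnd ℂ) t₁)
            * (t - t₃) * (t - (starRingEnd ℂ) t₃)) :
    z ^ 2 * (2 * ‖t₁‖ * Real.cos t₁.arg + 2 * ‖t₃‖ * Real.cos t₃.arg) = 2 * z + 36 ∧
    z * (2 * ‖t₁‖ * Real.cos t₃.arg + 2 * ‖t₃‖ * Real.cos t₁.arg) = -14 := by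
  obtain ⟨hb, hd, he⟩ := Complex.quartic_vieta (e := 1) (d := -14)
    (fun t => by simpa only [sub_eq_add_neg, neg_mul] using hfac t)
  simp only [add_conj, mul_conj, normSq_eq_norm_sq, ← norm_mul_cos_arg] at hb hd he
  set r := ‖t₁‖
  set ρ := ‖t₃‖
  set c := Real.cos t₁.arg
  set C := Real.cos t₃.arg
  have hsum : z ^ 2 * (2 * r * c + 2 * ρ * C) = 2 * z + 36 := by
    apply ofReal_injective
    simp only [ofReal_mul, ofReal_add, ofReal_pow, ofReal_ofNat] at hb ⊢
    linear_combination hb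
  have hmixed : z ^ 2 * (r * ρ) * (2 * r * C + 2 * ρ * c) = 14 := by
    apply ofReal_injective
    simp only [ofReal_mul, ofReal_add, ofReal_pow, ofReal_ofNat] at hd ⊢
    linear_combination hd
  have hprod : z ^ 2 * (r * ρ) ^ 2 = 1 := by
    apply ofReal_injective
    simp only [ofReal_mul, ofReal_pow, ofReal_one] at he ⊢
    linear_combination -he
  have hzrρ : z * (r * ρ) = -1 :=
    mul_eq_neg_one_of_sq_mul_sq_eq_one hz (by positivity) hprod
  refine ⟨hsum, ?_⟩
  linear_combination -hmixed + (z * (2 * r * C + 2 * ρ * c)) * hzrρ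

theorem cos_ne_of_vieta_polar {z r ρ c C : ℝ} (hz : z < -9 / 4)
    (hsum : z ^ 2 * (2 * r * c + 2 * ρ * C) = 2 * z + 36)
    (hmixed : z * (2 * r * C + 2 * ρ * c) = -14) :
    C ≠ c ∧ C ≠ -c := by
  constructor
  · rintro rfl
    have : 16 * z + 36 = 0 := by linear_combination z * hmixed - hsum
    linarith
  · rintro rfl
    have : z = 3 := by linear_combination (z * hmixed + hsum) / 12
    linarith

theorem queen_args_sin_ne_general (z : ℝ) (hz : z < -9/4) (t₁ t₃ : ℂ)
    (hfac : ∀ t : ℂ,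
      (z : ℂ) ^ 2 * t ^ 4 + (-2 * z - 36) * t ^ 3 + (49 - 2 * z) * t ^ 2 - 14 * t + 1
        = (z : ℂ) ^ 2 * (t - t₁) * (t - (starRingEnd ℂ) t₁)
            * (t - t₃) * (t - (starRingEnd ℂ) t₃)) :
    Real.sin t₃.arg ≠ Real.sin t₁.arg ∧
    t₃.arg ≠ t₁.arg ∧ t₃.arg ≠ Real.pi - t₁.arg := by
  obtain ⟨hsum, hmixed⟩ := queen_vieta_polar (by linarith) hfac
  obtain ⟨hcos, hcos_neg⟩ := cos_ne_of_vieta_polar hz hsum hmixed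
  have hsin : Real.sin t₃.arg ≠ Real.sin t₁.arg := fun h =>
    (Real.cos_eq_or_cos_eq_neg_of_sin_eq h).elim hcos hcos_neg
  exact ⟨hsin, fun h => hsin (by rw [h]), fun h => hsin (by rw [h, Real.sin_pi_sub])⟩

/-- For real `z < -9/4` with conjugate root pairs `t₁ = conj t₂`, `t₃ = conj t₄` of
`D(t,z)`, `t₁, t₃` in the upper half-plane and `|t₁| < |t₃|`, writing `θ = Arg t₁`
and `φ = Arg t₃`, we have `sin φ ≠ sin θ`; in particular `φ ≠ θ` and `φ ≠ π - θ`. -/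
theorem queen_args_sin_ne (z : ℝ) (hz : z < -9/4) (t₁ t₃ : ℂ)
    (h1 : 0 < t₁.im) (h3 : 0 < t₃.im)
    (habs : ‖t₁‖ < ‖t₃‖)
    (hfac : ∀ t : ℂ,
      (z : ℂ) ^ 2 * t ^ 4 + (-2 * z - 36) * t ^ 3 + (49 - 2 * z) * t ^ 2 - 14 * t + 1
        = (z : ℂ) ^ 2 * (t - t₁) * (t - (starRingEnd ℂ) t₁)
            * (t - t₃) * (t - (starRingEnd ℂ) t₃)) :
    Real.sin t₃.arg ≠ Real.sin t₁.arg ∧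
    t₃.arg ≠ t₁.arg ∧ t₃.arg ≠ Real.pi - t₁.arg :=
  queen_args_sin_ne_general z hz t₁ t₃ hfac
end
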